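/- For every integer sequence x (indexed from 1) satisfying the Pell recurrence x_j = 2x_{j-1} + x_{j-2} for all j ≥ 3, and for every k ≥ 1, the sum of the first 4k terms equals 2P_{2k} times the (2k+1)st term: ∑_{i=1}^{4k} x_i = 2·P_{2k}·x_{2k+1}. -/

import Mathlib

/-!
A Pell-like sequence is determined by its first two terms, linearly:
`y n = P n * y 1 + P (n - 1) * y 0`. So it suffices to know the two Pell sums
`∑_{i < 4k} P (i + 1) = 2 P (2k) P (2k + 1)` and `∑_{i < 4k} P i = 2 P (2k) ^ 2`.
Telescoping `2 P (i + 1) = P (i + 2) - P i` gives `2 ∑_{i < n} P (i + 1) = P (n + 1) + P n - 1`,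
and at `n = 4k` the doubling formulas for `P (4k + 1)`, `P (4k)` together with Cassini's
identity at the even index `2k` turn this into the two sums.
-/

def pell : ℕ → ℕ
  | 0 => 0
  | 1 => 1
  | n + 2 => 2 * pell (n + 1) + pell n

open Finset

lemma pell_add_two (n : ℕ) : (pell (n + 2) : ℤ) = 2 * pell (n + 1) + pell n := by
  simp [pell]

-- Cassini's identity `P (n + 1) * P (n - 1) - P n ^ 2 = (-1) ^ n`, with `P (n - 1)` eliminated.
lemma pell_cassini (n : ℕ) :
    (pell (n + 1) : ℤ) ^ 2 - 2 * pell n * pell (n + 1) - pell n ^ 2 = (-1) ^ n := by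
  induction n with
  | zero => simp [pell]
  | succ n ih =>
    rw [pell_add_two, pow_succ]
    linear_combination -ih

lemma pellLike_add {y : ℕ → ℤ} (hy : ∀ n, y (n + 2) = 2 * y (n + 1) + y n) (m n : ℕ) :
    y (m + n + 1) = pell (m + 1) * y (n + 1) + pell m * y n := by
  induction m using Nat.twoStepInduction with
  | zero => simp [pell]
  | one => simp [pell, add_comm 1 n, hy]
  | more m ih₁ ih₂ =>
    rw [show m + 2 + n + 1 = m + n + 1 + 2 by ring, hy, show m + n + 1 + 1 = m + 1 + n + 1 by ring,
      ih₁, ih₂]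
    push_cast [pell]
    ring

lemma two_mul_sum_range_pellLike {y : ℕ → ℤ} (hy : ∀ n, y (n + 2) = 2 * y (n + 1) + y n)
    (n : ℕ) : 2 * ∑ i ∈ range n, y (i + 1) = y (n + 1) + y n - y 1 - y 0 := by
  induction n with
  | zero => simp
  | succ n ih =>
    rw [sum_range_succ, mul_add, ih, hy]
    ring

lemma pell_two_mul_add_one (n : ℕ) :
    (pell (2 * n + 1) : ℤ) = pell (n + 1) ^ 2 + pell n ^ 2 := by
  rw [two_mul, pellLike_add (y := fun n => (pell n : ℤ)) pell_add_two]
  ring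

lemma pell_two_mul (n : ℕ) : (pell (2 * n) : ℤ) = 2 * pell n * (pell (n + 1) - pell n) := by
  have h := pellLike_add (y := fun n => (pell n : ℤ)) pell_add_two (n + 1) n
  rw [show n + 1 + n + 1 = 2 * n + 2 by ring, pell_add_two, pell_two_mul_add_one, pell_add_two] at h
  linear_combination h

lemma sum_range_four_mul_pell_succ (k : ℕ) :
    ∑ i ∈ range (4 * k), (pell (i + 1) : ℤ) = 2 * pell (2 * k) * pell (2 * k + 1) := by
  have hsum := two_mul_sum_range_pellLike (y := fun n => (pell n : ℤ)) pell_add_two (4 * k)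
  have hodd := pell_two_mul_add_one (2 * k)
  have heven := pell_two_mul (2 * k)
  have hcassini := pell_cassini (2 * k)
  rw [show 2 * (2 * k) = 4 * k by ring] at hodd heven
  rw [(even_two_mul k).neg_one_pow] at hcassini
  simp only [pell, Nat.cast_zero, Nat.cast_one] at hsum
  refine mul_left_cancel₀ two_ne_zero ?_
  linear_combination hsum + hodd + heven + hcassini

lemma sum_range_four_mul_pell (k : ℕ) :
    ∑ i ∈ range (4 * k), (pell i : ℤ) = 2 * pell (2 * k) ^ 2 := by
  have h := sum_range_succ' (fun i => (pell i : ℤ)) (4 * k)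
  rw [sum_range_succ, sum_range_four_mul_pell_succ, pell, Nat.cast_zero, add_zero] at h
  have hdouble := pell_two_mul (2 * k)
  rw [show 2 * (2 * k) = 4 * k by ring] at hdouble
  linear_combination h - hdouble

-- `pell (n + 1) - 2 * pell n` is `P (n - 1)`, continued to `P (-1) = 1`.
lemma pellLike_eq_pell_mul_add {y : ℕ → ℤ} (hy : ∀ n, y (n + 2) = 2 * y (n + 1) + y n)
    (n : ℕ) : y n = pell n * y 1 + (pell (n + 1) - 2 * pell n) * y 0 := by
  induction n using Nat.twoStepInduction with
  | zero => simp [pell]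
  | one => simp [pell]
  | more n ih₁ ih₂ =>
    rw [hy, ih₁, ih₂, pell_add_two, pell_add_two, pell_add_two]
    ring

lemma sum_range_four_mul_pellLike {y : ℕ → ℤ} (hy : ∀ n, y (n + 2) = 2 * y (n + 1) + y n)
    (k : ℕ) : ∑ i ∈ range (4 * k), y i = 2 * pell (2 * k) * y (2 * k) := by
  rw [sum_congr rfl fun i _ => pellLike_eq_pell_mul_add hy i, pellLike_eq_pell_mul_add hy (2 * k),
    sum_add_distrib, ← sum_mul, ← sum_mul, sum_sub_distrib, ← mul_sum]
  linear_combination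
    (y 1 - 2 * y 0) * sum_range_four_mul_pell k + y 0 * sum_range_four_mul_pell_succ k

theorem pell_like_trick_general (x : ℕ → ℤ)
    (hrec : ∀ j, 3 ≤ j → x j = 2 * x (j - 1) + x (j - 2)) (k : ℕ) :
    ∑ i ∈ Finset.Icc 1 (4 * k), x i = 2 * (pell (2 * k) : ℤ) * x (2 * k + 1) := by
  have hy (n : ℕ) : x (n + 1 + 2) = 2 * x (n + 1 + 1) + x (n + 1) := hrec (n + 3) (by omega)
  have hIcc : ∑ i ∈ Icc 1 (4 * k), x i = ∑ i ∈ range (4 * k), x (i + 1) := by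
    rw [range_eq_Ico, sum_Ico_add' x 0 (4 * k) 1]
    rfl
  rw [hIcc]
  exact sum_range_four_mul_pellLike (y := fun n => x (n + 1)) hy k

/-- For every Pell-like integer sequence (indexed from 1), the sum of the first
4k terms equals 2 P_{2k} times the (2k+1)-st term. -/
theorem pell_like_trick (x : ℕ → ℤ)
    (hrec : ∀ j, 3 ≤ j → x j = 2 * x (j - 1) + x (j - 2)) (k : ℕ) (hk : 1 ≤ k) :
    ∑ i ∈ Finset.Icc 1 (4 * k), x i = 2 * (pell (2 * k) : ℤ) * x (2 * k + 1) :=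
  pell_like_trick_general x hrec k
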